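/- arXiv:math/0004143 — 8 statements merged into one kernel-verified Lean document; each statement's English description precedes it below -/
import Mathlib

section
/- Under these hypotheses the modular operator is covariant with respect to the coaction, with a κ²-twist: F(Θ(q)) = (Θ ⊗ κ²)(F(q)) for all q ∈ B, where κ² = κ ∘ κ. -/
/-! The functionals `ω (· * b)`, `b : B`, separate the points of `B`, so their slices
`ω (· * b) ⊗ id` separate the points of `B ⊗ A` (`A` being free). Both sides have the same
slice `κ (Σ ω (b₍₀₎ q) b₍₁₎)`: for `F (Θ q)` use invariance with `b` and `Θ q` swapped, then
`ω (Θ q · x) = ω (x q)`; for `(Θ ⊗ κ²) (F q)` use `ω (Θ q₍₀₎ · b) = ω (b q₍₀₎)`, then invariance. -/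

open TensorProduct (lid)
open TensorProduct LinearMap

namespace TensorProduct

variable {R M N P Q : Type*} [CommRing R] [AddCommGroup M] [Module R M] [AddCommGroup N]
  [Module R N] [AddCommGroup P] [Module R P] [AddCommGroup Q] [Module R Q]

theorem lid_map_comp_right (f : M →ₗ[R] R) (g : N →ₗ[R] P) (h : P →ₗ[R] Q) (t : M ⊗[R] N) :
    lid R Q (map f (h ∘ₗ g) t) = h (lid R P (map f g t)) := by
  induction t using TensorProduct.induction_on with
  | zero => simp
  | tmul m n => simp
  | add t t' ht ht' => simp only [map_add, ht, ht']

theorem apply_equivFinsuppOfBasisRight_apply {ι : Type*} [DecidableEq ι]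
    (𝒞 : Module.Basis ι R N) (φ : M →ₗ[R] R) (t : M ⊗[R] N) (i : ι) :
    φ (equivFinsuppOfBasisRight 𝒞 t i) = 𝒞.repr (lid R N (rTensor N φ t)) i := by
  induction t using TensorProduct.induction_on with
  | zero => simp
  | tmul m n => simp [mul_comm]
  | add t t' ht ht' => simp only [map_add, Finsupp.add_apply, ht, ht']

theorem ext_of_lid_rTensor [Module.Free R N] {J : Type*} (φ : J → M →ₗ[R] R)
    (hφ : ∀ x, (∀ j, φ j x = 0) → x = 0) {t t' : M ⊗[R] N}
    (h : ∀ j, lid R N (rTensor N (φ j) t) = lid R N (rTensor N (φ j) t')) :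
    t = t' := by
  classical
  let 𝒞 := Module.Free.chooseBasis R N
  rw [← sub_eq_zero, ← (equivFinsuppOfBasisRight 𝒞).map_eq_zero_iff]
  ext i
  refine hφ _ fun j => ?_
  rw [apply_equivFinsuppOfBasisRight_apply, map_sub, map_sub, h, sub_self, map_zero,
    Finsupp.zero_apply]

end TensorProduct

section Covariance

variable {K A B : Type*} [CommRing K] [AddCommGroup A] [Module K A] [Ring B] [Algebra K B]
  {ω : B →ₗ[K] K} {Θ : B →ₗ[K] B}

theorem comp_mulLeft_eq_of_modular (hmod : ∀ f g : B, ω (f * g) = ω (Θ g * f)) (b : B) :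
    ω ∘ₗ mulLeft K b = (ω ∘ₗ mulRight K b) ∘ₗ Θ :=
  LinearMap.ext fun x => hmod b x

theorem comp_mulRight_eq_of_modular (hmod : ∀ f g : B, ω (f * g) = ω (Θ g * f)) (q : B) :
    ω ∘ₗ mulRight K q = ω ∘ₗ mulLeft K (Θ q) :=
  LinearMap.ext fun x => hmod x q

theorem coaction_apply_modular_eq_of_invariant [Module.Free K A] (F : B →ₗ[K] B ⊗[K] A)
    (κ : A →ₗ[K] A)
    (hnondeg : ∀ x : B, (∀ b : B, ω (x * b) = 0) → x = 0)
    (hmod : ∀ f g : B, ω (f * g) = ω (Θ g * f))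
    (hinv : ∀ b q : B, lid K A (map (ω ∘ₗ mulLeft K b) κ (F q)) =
      lid K A (map (ω ∘ₗ mulRight K q) LinearMap.id (F b)))
    (q : B) : F (Θ q) = map Θ (κ ∘ₗ κ) (F q) := by
  refine ext_of_lid_rTensor (fun b => ω ∘ₗ mulRight K b) hnondeg fun b => ?_
  calc lid K A (map (ω ∘ₗ mulRight K b) LinearMap.id (F (Θ q)))
      = lid K A (map (ω ∘ₗ mulRight K q) κ (F b)) := by
        rw [← hinv, comp_mulRight_eq_of_modular hmod]
    _ = κ (lid K A (map (ω ∘ₗ mulLeft K b) κ (F q))) := by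
        rw [hinv, ← lid_map_comp_right, LinearMap.comp_id]
    _ = lid K A (map (ω ∘ₗ mulRight K b) LinearMap.id (map Θ (κ ∘ₗ κ) (F q))) := by
        rw [← lid_map_comp_right, comp_mulLeft_eq_of_modular hmod, map_map,
          LinearMap.id_comp]

end Covariance

theorem modular_operator_coaction_covariance_general
    {A : Type*} [Ring A] [HopfAlgebra ℂ A]
    {B : Type*} [Ring B] [Algebra ℂ B]
    (F : B →ₐ[ℂ] B ⊗[ℂ] A)
    (ω : B →ₗ[ℂ] ℂ)
    (hnondeg : ∀ x : B, (∀ b : B, ω (x * b) = 0) → x = 0)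
    (Θ : B →ₗ[ℂ] B)
    (hmod : ∀ f g : B, ω (f * g) = ω (Θ g * f))
    -- invariance property: Σ ω(b q₍₀₎) κ(q₍₁₎) = Σ ω(b₍₀₎ q) b₍₁₎
    (hinv : ∀ b q : B,
      ((TensorProduct.lid ℂ A).toLinearMap ∘ₗ
        TensorProduct.map (ω ∘ₗ LinearMap.mulLeft ℂ b)
          (HopfAlgebra.antipode (R := ℂ) (A := A))) (F q) =
      ((TensorProduct.lid ℂ A).toLinearMap ∘ₗ
        TensorProduct.map (ω ∘ₗ LinearMap.mulRight ℂ q) LinearMap.id) (F b)) :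
    ∀ q : B, F (Θ q) =
      (TensorProduct.map Θ
        ((HopfAlgebra.antipode (R := ℂ) (A := A)) ∘ₗ (HopfAlgebra.antipode (R := ℂ) (A := A))))
        (F q) :=
  coaction_apply_modular_eq_of_invariant F.toLinearMap _ hnondeg hmod hinv

/-- the modular operator is covariant with respect to the coaction, with a
`κ²`-twist: `F (Θ q) = (Θ ⊗ κ²) (F q)` for all `q : B`, where `κ² = κ ∘ κ` and `κ` is the
(bijective) antipode of the Hopf algebra `A`. -/
theorem modular_operator_coaction_covariance
    {A : Type*} [Ring A] [HopfAlgebra ℂ A]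
    (hκ : Function.Bijective (HopfAlgebra.antipode (R := ℂ) (A := A)))
    {B : Type*} [Ring B] [Algebra ℂ B]
    (F : B →ₐ[ℂ] B ⊗[ℂ] A)
    -- coassociativity of the coaction: (F ⊗ id) ∘ F = (id ⊗ Δ) ∘ F
    (hF1 : ∀ b : B,
      (TensorProduct.assoc ℂ B A A) ((LinearMap.rTensor A F.toLinearMap) (F b)) =
        (LinearMap.lTensor B (Coalgebra.comul (R := ℂ) (A := A))) (F b))
    -- counit axiom of the coaction: (id ⊗ ε) ∘ F = id
    (hF2 : ∀ b : B,
      (TensorProduct.rid ℂ B) ((LinearMap.lTensor B (Coalgebra.counit (R := ℂ) (A := A))) (F b)) = b)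
    (ω : B →ₗ[ℂ] ℂ)
    (hnondeg : ∀ x : B, (∀ b : B, ω (x * b) = 0) → x = 0)
    (Θ : B →ₗ[ℂ] B)
    (hmod : ∀ f g : B, ω (f * g) = ω (Θ g * f))
    -- invariance property: Σ ω(b q₍₀₎) κ(q₍₁₎) = Σ ω(b₍₀₎ q) b₍₁₎
    (hinv : ∀ b q : B,
      ((TensorProduct.lid ℂ A).toLinearMap ∘ₗ
        TensorProduct.map (ω ∘ₗ LinearMap.mulLeft ℂ b)
          (HopfAlgebra.antipode (R := ℂ) (A := A))) (F q) =
      ((TensorProduct.lid ℂ A).toLinearMap ∘ₗ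
        TensorProduct.map (ω ∘ₗ LinearMap.mulRight ℂ q) LinearMap.id) (F b)) :
    ∀ q : B, F (Θ q) =
      (TensorProduct.map Θ
        ((HopfAlgebra.antipode (R := ℂ) (A := A)) ∘ₗ (HopfAlgebra.antipode (R := ℂ) (A := A))))
        (F q) :=
  modular_operator_coaction_covariance_general F ω hnondeg Θ hmod hinv
end

section
/- Under these hypotheses the modular operator preserves the coinvariant subalgebra: if b ∈ B satisfies F(b) = b ⊗ 1, then F(Θ(b)) = Θ(b) ⊗ 1. -/
open TensorProduct LinearMap

/-! For a coinvariant `b`, the invariance property with `q = b` collapses, since `κ 1 = 1`, to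
`(ω(· b) ⊗ id)(F x) = ω(x b) • 1` for all `x`. The modular property identifies `ω(Θ b ·)` with
`ω(· b)`, so the invariance property for the pair `(Θ b, x)` yields
`(ω(· x) ⊗ id)(F (Θ b)) = ω(Θ b x) • 1 = (ω(· x) ⊗ id)(Θ b ⊗ 1)`. The functionals `ω(· x)` separate
the points of `B` by nondegeneracy, hence their slices separate the points of `B ⊗ A`. -/

theorem TensorProduct.lid_map_eq_apply_lid_rTensor {R M N : Type*} [CommSemiring R]
    [AddCommMonoid M] [Module R M] [AddCommMonoid N] [Module R N]
    (f : M →ₗ[R] R) (g : N →ₗ[R] N) (t : M ⊗[R] N) :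
    TensorProduct.lid R N (map f g t) = g (TensorProduct.lid R N (f.rTensor N t)) := by
  induction t using TensorProduct.induction_on with
  | zero => simp
  | tmul m n => simp
  | add x y hx hy => simp only [map_add, hx, hy]

theorem TensorProduct.eq_zero_of_forall_lid_rTensor_eq_zero {K M N ι : Type*} [CommRing K]
    [AddCommGroup M] [Module K M] [AddCommGroup N] [Module K N] [Module.Free K N]
    (φ : ι → M →ₗ[K] K) (hφ : ∀ m, (∀ i, φ i m = 0) → m = 0)
    {t : M ⊗[K] N} (ht : ∀ i, TensorProduct.lid K N ((φ i).rTensor N t) = 0) : t = 0 := by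
  let bN := Module.Free.chooseBasis K N
  let e : M ⊗[K] N ≃ₗ[K] _ →₀ M :=
    (TensorProduct.congr (LinearEquiv.refl K M) bN.repr).trans (finsuppScalarRight K K M _)
  have coord : ∀ (f : M →ₗ[K] K) (s : M ⊗[K] N) j,
      bN.repr (TensorProduct.lid K N (f.rTensor N s)) j = f (e s j) := by
    intro f s j
    induction s using TensorProduct.induction_on with
    | zero => simp
    | tmul m n => simp [e, mul_comm]
    | add x y hx hy => simp only [map_add, Finsupp.add_apply, hx, hy]
  suffices e t = 0 by simpa using congrArg e.symm this
  ext j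
  exact hφ _ fun i => by simp [← coord, ht i]

theorem modular_operator_preserves_coinvariants_general
    {A : Type*} [Ring A] [HopfAlgebra ℂ A]
    {B : Type*} [Ring B] [Algebra ℂ B]
    (F : B →ₐ[ℂ] B ⊗[ℂ] A)
    (ω : B →ₗ[ℂ] ℂ)
    (hnondeg : ∀ x : B, (∀ b : B, ω (x * b) = 0) → x = 0)
    (Θ : B →ₗ[ℂ] B)
    (hmod : ∀ f g : B, ω (f * g) = ω (Θ g * f))
    -- invariance property: Σ ω(b q₍₀₎) κ(q₍₁₎) = Σ ω(b₍₀₎ q) b₍₁₎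
    (hinv : ∀ b q : B,
      ((TensorProduct.lid ℂ A).toLinearMap ∘ₗ
        TensorProduct.map (ω ∘ₗ LinearMap.mulLeft ℂ b)
          (HopfAlgebra.antipode (R := ℂ) (A := A))) (F q) =
      ((TensorProduct.lid ℂ A).toLinearMap ∘ₗ
        TensorProduct.map (ω ∘ₗ LinearMap.mulRight ℂ q) LinearMap.id) (F b)) :
    ∀ b : B, F b = b ⊗ₜ[ℂ] (1 : A) → F (Θ b) = (Θ b) ⊗ₜ[ℂ] (1 : A) := by
  intro b hb
  have hΘb : ω ∘ₗ mulLeft ℂ (Θ b) = ω ∘ₗ mulRight ℂ b := LinearMap.ext fun x => (hmod x b).symm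
  have hcoinv (x : B) :
      TensorProduct.lid ℂ A ((ω ∘ₗ mulRight ℂ b).rTensor A (F x)) = ω (x * b) • 1 := by
    simpa [hb, rTensor_def] using (hinv x b).symm
  rw [← sub_eq_zero]
  refine eq_zero_of_forall_lid_rTensor_eq_zero (fun x => ω ∘ₗ mulRight ℂ x) hnondeg fun x => ?_
  have hslice := hinv (Θ b) x
  simp only [comp_apply, LinearEquiv.coe_coe, hΘb, lid_map_eq_apply_lid_rTensor, ← rTensor_def,
    hcoinv] at hslice
  rw [map_sub, map_sub, ← hslice]
  simp [hmod x b]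

/-- the modular operator preserves the coinvariant subalgebra: if `b : B`
satisfies `F b = b ⊗ 1`, then `F (Θ b) = Θ b ⊗ 1`. -/
theorem modular_operator_preserves_coinvariants
    {A : Type*} [Ring A] [HopfAlgebra ℂ A]
    (hκ : Function.Bijective (HopfAlgebra.antipode (R := ℂ) (A := A)))
    {B : Type*} [Ring B] [Algebra ℂ B]
    (F : B →ₐ[ℂ] B ⊗[ℂ] A)
    -- coassociativity of the coaction: (F ⊗ id) ∘ F = (id ⊗ Δ) ∘ F
    (hF1 : ∀ b : B,
      (TensorProduct.assoc ℂ B A A) ((LinearMap.rTensor A F.toLinearMap) (F b)) =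
        (LinearMap.lTensor B (Coalgebra.comul (R := ℂ) (A := A))) (F b))
    -- counit axiom of the coaction: (id ⊗ ε) ∘ F = id
    (hF2 : ∀ b : B,
      (TensorProduct.rid ℂ B) ((LinearMap.lTensor B (Coalgebra.counit (R := ℂ) (A := A))) (F b)) = b)
    (ω : B →ₗ[ℂ] ℂ)
    (hnondeg : ∀ x : B, (∀ b : B, ω (x * b) = 0) → x = 0)
    (Θ : B →ₗ[ℂ] B)
    (hmod : ∀ f g : B, ω (f * g) = ω (Θ g * f))
    -- invariance property: Σ ω(b q₍₀₎) κ(q₍₁₎) = Σ ω(b₍₀₎ q) b₍₁₎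
    (hinv : ∀ b q : B,
      ((TensorProduct.lid ℂ A).toLinearMap ∘ₗ
        TensorProduct.map (ω ∘ₗ LinearMap.mulLeft ℂ b)
          (HopfAlgebra.antipode (R := ℂ) (A := A))) (F q) =
      ((TensorProduct.lid ℂ A).toLinearMap ∘ₗ
        TensorProduct.map (ω ∘ₗ LinearMap.mulRight ℂ q) LinearMap.id) (F b)) :
    ∀ b : B, F b = b ⊗ₜ[ℂ] (1 : A) → F (Θ b) = (Θ b) ⊗ₜ[ℂ] (1 : A) :=
  modular_operator_preserves_coinvariants_general F ω hnondeg Θ hmod hinv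
end

section
/- If range(id − σ) = ker(id + τ), then σ and τ commute: σ ∘ τ = τ ∘ σ. -/
theorem Commute.of_one_sub_one_add {R : Type*} [Ring R] {s t : R}
    (h : Commute (1 - s) (1 + t)) : Commute s t := by
  have hs : Commute s (1 + t) := by
    simpa only [sub_sub_cancel] using (Commute.one_left (1 + t)).sub_left h
  simpa only [add_sub_cancel_left] using hs.sub_right (Commute.one_right s)

namespace LinearMap.IsSymmetric

variable {𝕜 E : Type*} [RCLike 𝕜] [NormedAddCommGroup E] [InnerProductSpace 𝕜 E]

/-- Taking adjoints of `B ∘ A = 0`. -/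
theorem comp_eq_zero_swap {A B : E →ₗ[𝕜] E} (hA : A.IsSymmetric) (hB : B.IsSymmetric)
    (h : B ∘ₗ A = 0) : A ∘ₗ B = 0 := by
  ext x
  refine ext_inner_right 𝕜 fun y => ?_
  calc inner 𝕜 (A (B x)) y = inner 𝕜 x (B (A y)) := by rw [hA, hB]
    _ = inner 𝕜 (0 : E) y := by rw [← comp_apply, h, zero_apply, inner_zero_right, inner_zero_left]

end LinearMap.IsSymmetric

theorem range_ker_coupling_commute_general
    {W : Type*} [NormedAddCommGroup W] [InnerProductSpace ℂ W]
    (σ τ : W →ₗ[ℂ] W) (hσ : σ.IsSymmetric) (hτ : τ.IsSymmetric)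
    (h : LinearMap.range (LinearMap.id - σ) = LinearMap.ker (LinearMap.id + τ)) :
    σ ∘ₗ τ = τ ∘ₗ σ := by
  have hBA : (LinearMap.id + τ) ∘ₗ (LinearMap.id - σ) = 0 := LinearMap.range_le_ker_iff.mp h.le
  have hAB : (LinearMap.id - σ) ∘ₗ (LinearMap.id + τ) = 0 :=
    (LinearMap.IsSymmetric.id.sub hσ).comp_eq_zero_swap (LinearMap.IsSymmetric.id.add hτ) hBA
  have hcomm : Commute (1 - σ) (1 + τ) := by
    change (LinearMap.id - σ) ∘ₗ (LinearMap.id + τ) = (LinearMap.id + τ) ∘ₗ (LinearMap.id - σ)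
    rw [hAB, hBA]
  exact hcomm.of_one_sub_one_add

/-- for selfadjoint `σ, τ` on a finite-dimensional complex inner product
space, if `range (id − σ) = ker (id + τ)` then `σ` and `τ` commute. -/
theorem range_ker_coupling_commute
    {W : Type*} [NormedAddCommGroup W] [InnerProductSpace ℂ W] [FiniteDimensional ℂ W]
    (σ τ : W →ₗ[ℂ] W) (hσ : σ.IsSymmetric) (hτ : τ.IsSymmetric)
    (h : LinearMap.range (LinearMap.id - σ) = LinearMap.ker (LinearMap.id + τ)) :
    σ ∘ₗ τ = τ ∘ₗ σ :=
  range_ker_coupling_commute_general σ τ hσ hτ h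
end

section
/- If range(id − σ) = ker(id + τ), σ is bijective, and every eigenvalue of σ other than 1 is negative, then the quadratic form of σ is strictly negative on ker(id + τ): for every nonzero x ∈ ker(id + τ), the inner product ⟨x, σx⟩ is a negative real number. -/
/-!
Since `id - σ` is symmetric, its range is orthogonal to its kernel, the `1`-eigenspace of `σ`.
In an orthonormal eigenbasis `bᵢ` of `σ` with eigenvalues `μᵢ`, `re ⟪x, σ x⟫ = ∑ μᵢ ‖⟪bᵢ, x⟫‖²`;
for `x` orthogonal to the `1`-eigenspace only the negative `μᵢ` contribute, and not all of their
coefficients vanish when `x ≠ 0`.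
-/

open Module.End
open scoped InnerProductSpace

namespace LinearMap.IsSymmetric

variable {𝕜 E : Type*} [RCLike 𝕜] [NormedAddCommGroup E] [InnerProductSpace 𝕜 E]
  {T : E →ₗ[𝕜] E}

theorem range_id_sub_le_orthogonal_eigenspace_one (hT : T.IsSymmetric) :
    range (LinearMap.id - T) ≤ (eigenspace T 1)ᗮ := by
  have hker : eigenspace T 1 = ker (LinearMap.id - T) := by
    ext x
    rw [mem_eigenspace_iff, one_smul, mem_ker, sub_apply, id_apply, sub_eq_zero, eq_comm]
  rw [hker, ← (IsSymmetric.id.sub hT).orthogonal_range]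
  exact Submodule.le_orthogonal_orthogonal _

variable [FiniteDimensional 𝕜 E] {n : ℕ}

theorem re_inner_self_apply_eq_sum (hT : T.IsSymmetric) (hn : Module.finrank 𝕜 E = n) (x : E) :
    RCLike.re ⟪x, T x⟫_𝕜 =
      ∑ i, hT.eigenvalues hn i * ‖⟪hT.eigenvectorBasis hn i, x⟫_𝕜‖ ^ 2 := by
  set b := hT.eigenvectorBasis hn
  rw [← b.sum_inner_mul_inner x (T x), map_sum]
  refine Finset.sum_congr rfl fun i _ => ?_
  rw [← hT, hT.apply_eigenvectorBasis, inner_smul_left, RCLike.conj_ofReal, mul_left_comm,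
    ← inner_conj_symm x, RCLike.conj_mul, ← RCLike.ofReal_pow, ← RCLike.ofReal_mul,
    RCLike.ofReal_re]

theorem inner_eigenvectorBasis_eq_zero_of_mem_orthogonal (hT : T.IsSymmetric)
    (hn : Module.finrank 𝕜 E = n) {c : ℝ} {x : E} (hx : x ∈ (eigenspace T c)ᗮ) {i : Fin n}
    (hi : hT.eigenvalues hn i = c) : ⟪hT.eigenvectorBasis hn i, x⟫_𝕜 = 0 := by
  refine Submodule.inner_right_of_mem_orthogonal ?_ hx
  rw [← hi]
  exact (hT.hasEigenvector_eigenvectorBasis hn i).1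

theorem re_inner_self_apply_neg_of_mem_orthogonal_eigenspace (hT : T.IsSymmetric) {c : ℝ}
    (hneg : ∀ μ : ℝ, HasEigenvalue T μ → μ ≠ c → μ < 0) {x : E}
    (hx : x ∈ (eigenspace T c)ᗮ) (hx0 : x ≠ 0) : RCLike.re ⟪x, T x⟫_𝕜 < 0 := by
  set b := hT.eigenvectorBasis rfl
  have hneg_of_ne : ∀ i, ⟪b i, x⟫_𝕜 ≠ 0 → hT.eigenvalues rfl i < 0 := fun i hi =>
    hneg _ (hT.hasEigenvalue_eigenvalues rfl i) fun hic =>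
      hi (hT.inner_eigenvectorBasis_eq_zero_of_mem_orthogonal rfl hx hic)
  obtain ⟨i, hi⟩ : ∃ i, ⟪b i, x⟫_𝕜 ≠ 0 := by
    by_contra! h
    exact hx0 (by simpa [h] using (b.sum_repr' x).symm)
  rw [hT.re_inner_self_apply_eq_sum rfl]
  refine Finset.sum_neg' (fun j _ => ?_) ⟨i, Finset.mem_univ i, ?_⟩
  · by_cases hj : ⟪b j, x⟫_𝕜 = 0
    · simp [b, hj]
    · exact mul_nonpos_of_nonpos_of_nonneg (hneg_of_ne j hj).le (by positivity)
  · exact mul_neg_of_neg_of_pos (hneg_of_ne i hi) (by positivity)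

end LinearMap.IsSymmetric

theorem sigma_strictly_negative_on_ker_general
    {W : Type*} [NormedAddCommGroup W] [InnerProductSpace ℂ W] [FiniteDimensional ℂ W]
    (σ τ : W →ₗ[ℂ] W) (hσ : σ.IsSymmetric)
    (h : LinearMap.range (LinearMap.id - σ) = LinearMap.ker (LinearMap.id + τ))
    (heig : ∀ μ : ℂ, Module.End.HasEigenvalue σ μ → μ ≠ 1 → ∃ r : ℝ, (μ = (r : ℂ)) ∧ r < 0) :
    ∀ x ∈ LinearMap.ker (LinearMap.id + τ), x ≠ 0 →
      ∃ r : ℝ, ((inner ℂ x (σ x) : ℂ) = (r : ℂ)) ∧ r < 0 := by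
  intro x hx hx0
  have hneg : ∀ μ : ℝ, HasEigenvalue σ μ → μ ≠ 1 → μ < 0 := fun μ hμ hμ1 => by
    obtain ⟨r, hμr, hr⟩ := heig μ hμ (mod_cast hμ1)
    exact (Complex.ofReal_injective hμr) ▸ hr
  rw [← h] at hx
  refine ⟨RCLike.re ⟪x, σ x⟫_ℂ, (hσ.coe_re_inner_self_apply x).symm, ?_⟩
  exact hσ.re_inner_self_apply_neg_of_mem_orthogonal_eigenspace (c := 1) (mod_cast hneg)
    (hσ.range_id_sub_le_orthogonal_eigenspace_one hx) hx0

/-- if `range (id − σ) = ker (id + τ)`, `σ` is bijective, and every eigenvalue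
of `σ` other than `1` is negative, then the quadratic form of `σ` is strictly negative on
`ker (id + τ)`: for every nonzero `x ∈ ker (id + τ)`, `⟨x, σ x⟩` is a negative real number. -/
theorem sigma_strictly_negative_on_ker
    {W : Type*} [NormedAddCommGroup W] [InnerProductSpace ℂ W] [FiniteDimensional ℂ W]
    (σ τ : W →ₗ[ℂ] W) (hσ : σ.IsSymmetric) (hτ : τ.IsSymmetric)
    (h : LinearMap.range (LinearMap.id - σ) = LinearMap.ker (LinearMap.id + τ))
    (hbij : Function.Bijective σ)
    (heig : ∀ μ : ℂ, Module.End.HasEigenvalue σ μ → μ ≠ 1 → ∃ r : ℝ, (μ = (r : ℂ)) ∧ r < 0) :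
    ∀ x ∈ LinearMap.ker (LinearMap.id + τ), x ≠ 0 →
      ∃ r : ℝ, ((inner ℂ x (σ x) : ℂ) = (r : ℂ)) ∧ r < 0 :=
  sigma_strictly_negative_on_ker_general σ τ hσ h heig
end

section
/- The operator C is automatically selfadjoint, positive-definite (⟨x, Cx⟩ > 0 for all nonzero x), hence bijective, and it is conjugated into its inverse by the involution: s ∘ C ∘ s = C⁻¹. -/
/-!
Taking `y = x` in `⟪s x, s y⟫ = ⟪y, C x⟫` gives `⟪x, C x⟫ = ‖s x‖²`, which is positive for
`x ≠ 0` because the involution `s` is injective; swapping `x` and `y` and conjugating shows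
that `C` is symmetric. Applying the hypothesis to `s (C (s x))` and `y`, and using `s ∘ s = id`
twice, gives `⟪y, C (s (C (s x)))⟫ = ⟪y, x⟫` for all `y`, so `s ∘ C ∘ s` is a two-sided
inverse of `C`.
-/

section ModularMap

variable {𝕜 V : Type*} [RCLike 𝕜] [NormedAddCommGroup V] [InnerProductSpace 𝕜 V]
  {s : V →ₗ⋆[𝕜] V} {C : V →ₗ[𝕜] V}

theorem inner_apply_self_eq_norm_sq_of_inner_conj
    (hC : ∀ x y : V, inner 𝕜 (s x) (s y) = inner 𝕜 y (C x)) (x : V) :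
    inner 𝕜 x (C x) = ((‖s x‖ ^ 2 : ℝ) : 𝕜) := by
  rw [← hC x x, inner_self_eq_norm_sq_to_K, RCLike.ofReal_pow]

theorem isSymmetric_of_inner_conj
    (hC : ∀ x y : V, inner 𝕜 (s x) (s y) = inner 𝕜 y (C x)) : C.IsSymmetric := by
  intro x y
  rw [← hC y x, ← inner_conj_symm, ← hC x y, inner_conj_symm]

theorem exists_pos_inner_apply_self_of_inner_conj (hs : ∀ x : V, s (s x) = x)
    (hC : ∀ x y : V, inner 𝕜 (s x) (s y) = inner 𝕜 y (C x)) {x : V} (hx : x ≠ 0) :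
    ∃ r : ℝ, inner 𝕜 x (C x) = (r : 𝕜) ∧ 0 < r := by
  have hsx : s x ≠ 0 := (map_ne_zero_iff s (Function.Involutive.injective hs)).mpr hx
  exact ⟨‖s x‖ ^ 2, inner_apply_self_eq_norm_sq_of_inner_conj hC x, by positivity⟩

theorem apply_conj_apply_conj_of_inner_conj (hs : ∀ x : V, s (s x) = x)
    (hC : ∀ x y : V, inner 𝕜 (s x) (s y) = inner 𝕜 y (C x)) (x : V) :
    C (s (C (s x))) = x := by
  refine ext_inner_left 𝕜 fun y => ?_
  calc inner 𝕜 y (C (s (C (s x))))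
      = inner 𝕜 (C (s x)) (s y) := by rw [← hC, hs]
    _ = starRingEnd 𝕜 (inner 𝕜 (s y) (C (s x))) := (inner_conj_symm _ _).symm
    _ = starRingEnd 𝕜 (inner 𝕜 x y) := by rw [← hC, hs, hs]
    _ = inner 𝕜 y x := inner_conj_symm _ _

theorem conj_apply_conj_apply_of_inner_conj (hs : ∀ x : V, s (s x) = x)
    (hC : ∀ x y : V, inner 𝕜 (s x) (s y) = inner 𝕜 y (C x)) (x : V) :
    s (C (s (C x))) = x := by
  simpa only [hs] using congrArg s (apply_conj_apply_conj_of_inner_conj hs hC (s x))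

end ModularMap

theorem modular_map_selfadjoint_positive_general
    {V : Type*} [NormedAddCommGroup V] [InnerProductSpace ℂ V]
    (s : V →ₗ⋆[ℂ] V) (hs : ∀ x : V, s (s x) = x)
    (C : V →ₗ[ℂ] V)
    (hC : ∀ x y : V, (inner ℂ (s x) (s y) : ℂ) = inner ℂ y (C x)) :
    C.IsSymmetric ∧
    (∀ x : V, x ≠ 0 → ∃ r : ℝ, ((inner ℂ x (C x) : ℂ) = (r : ℂ)) ∧ 0 < r) ∧
    Function.Bijective C ∧
    (∀ x : V, C (s (C (s x))) = x) ∧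
    (∀ x : V, s (C (s (C x))) = x) := by
  have hright := apply_conj_apply_conj_of_inner_conj hs hC
  have hleft := conj_apply_conj_apply_of_inner_conj hs hC
  exact ⟨isSymmetric_of_inner_conj hC,
    fun _ hx => exists_pos_inner_apply_self_of_inner_conj hs hC hx,
    Function.bijective_iff_has_inverse.mpr ⟨fun y => s (C (s y)), hleft, hright⟩,
    hright, hleft⟩

/-- if `s` is a conjugate-linear involution on a finite-dimensional complex
inner product space `V` and `C` is a ℂ-linear map with `⟨s x, s y⟩ = ⟨y, C x⟩`, then `C` is
selfadjoint, positive-definite, hence bijective, and `s ∘ C ∘ s = C⁻¹`. -/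
theorem modular_map_selfadjoint_positive
    {V : Type*} [NormedAddCommGroup V] [InnerProductSpace ℂ V] [FiniteDimensional ℂ V]
    (s : V →ₗ⋆[ℂ] V) (hs : ∀ x : V, s (s x) = x)
    (C : V →ₗ[ℂ] V)
    (hC : ∀ x y : V, (inner ℂ (s x) (s y) : ℂ) = inner ℂ y (C x)) :
    C.IsSymmetric ∧
    (∀ x : V, x ≠ 0 → ∃ r : ℝ, ((inner ℂ x (C x) : ℂ) = (r : ℂ)) ∧ 0 < r) ∧
    Function.Bijective C ∧
    (∀ x : V, C (s (C (s x))) = x) ∧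
    (∀ x : V, s (C (s (C x))) = x) :=
  modular_map_selfadjoint_positive_general s hs C hC
end

section
/- The antilinear involution s admits a polar decomposition: there exist a selfadjoint positive-definite ℂ-linear map R : V → V with R ∘ R = C and a conjugate-linear map J : V → V with J ∘ J = id and ⟨Jx, Jy⟩ = ⟨y, x⟩ for all x, y ∈ V, such that s = J ∘ R = R⁻¹ ∘ J; moreover J = s ∘ R⁻¹ and s ∘ R ∘ s = R⁻¹. -/
open scoped InnerProductSpace ComplexOrder

/-! `C` is positive because `⟪x, C x⟫ = ‖s x‖²`; let `R` be its positive square root and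
`J := R ∘ s`. The defining identity of `C` makes `s C s` the inverse of `C` and makes `s R s`
positive. Since `(s R s)² = s C s = (R⁻¹)²`, uniqueness of positive square roots gives
`s R s = R⁻¹`, and every claimed identity follows from this. -/

namespace LinearMap

variable {V : Type*} [NormedAddCommGroup V] [InnerProductSpace ℂ V] [FiniteDimensional ℂ V]

theorem IsPositive.exists_isPositive_mul_self_eq {T : V →ₗ[ℂ] V} (hT : T.IsPositive) :
    ∃ R : V →ₗ[ℂ] V, R.IsPositive ∧ R * R = T := by
  have hT' : 0 ≤ T.toContinuousLinearMap :=
    (ContinuousLinearMap.nonneg_iff_isPositive _).mpr hT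
  refine ⟨(CFC.sqrt T.toContinuousLinearMap : V →L[ℂ] V),
    (ContinuousLinearMap.nonneg_iff_isPositive _).mp (CFC.sqrt_nonneg _), ?_⟩
  rw [← ContinuousLinearMap.toLinearMap_mul, CFC.sqrt_mul_sqrt_self _ hT']
  rfl

theorem IsPositive.eq_of_mul_self_eq {R S : V →ₗ[ℂ] V} (hR : R.IsPositive)
    (hS : S.IsPositive) (h : R * R = S * S) : R = S := by
  have hR' : 0 ≤ R.toContinuousLinearMap := (ContinuousLinearMap.nonneg_iff_isPositive _).mpr hR
  have hS' : 0 ≤ S.toContinuousLinearMap := (ContinuousLinearMap.nonneg_iff_isPositive _).mpr hS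
  have h' : R.toContinuousLinearMap * R.toContinuousLinearMap =
      S.toContinuousLinearMap * S.toContinuousLinearMap :=
    ContinuousLinearMap.coe_injective h
  exact congrArg ContinuousLinearMap.toLinearMap
    ((CFC.sqrt_unique h' hR').symm.trans (CFC.sqrt_unique rfl hS'))

theorem IsPositive.inner_pos_of_injective {T : V →ₗ[ℂ] V} (hT : T.IsPositive)
    (hinj : Function.Injective T) {x : V} (hx : x ≠ 0) : 0 < ⟪x, T x⟫_ℂ := by
  obtain ⟨Q, hQ, rfl⟩ := hT.exists_isPositive_mul_self_eq
  have hQx : Q x ≠ 0 := fun h => hx (hinj (by simp [h]))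
  rw [Module.End.mul_apply, ← hQ.isSymmetric, inner_self_eq_norm_sq_to_K, ← RCLike.ofReal_pow]
  exact RCLike.ofReal_pos.mpr (pow_pos (norm_pos_iff.mpr hQx) 2)

theorem IsPositive.eq_symm_of_mul_self_mul_mul_self_eq_one {D : V →ₗ[ℂ] V} {e : V ≃ₗ[ℂ] V}
    (hD : D.IsPositive) (he : (e : V →ₗ[ℂ] V).IsPositive)
    (h : (e : V →ₗ[ℂ] V) * e * (D * D) = 1) : D = e.symm := by
  refine hD.eq_of_mul_self_eq he.toLinearMap_symm ?_
  ext x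
  simpa using congrArg (fun f : V →ₗ[ℂ] V => e.symm (e.symm (f x))) h

end LinearMap

namespace AntilinearInvolution

variable {V : Type*} [NormedAddCommGroup V] [InnerProductSpace ℂ V]
  {s : V →ₗ⋆[ℂ] V} {C : V →ₗ[ℂ] V}

theorem isPositive_of_inner_antilinear_eq (hC : ∀ x y : V, ⟪s x, s y⟫_ℂ = ⟪y, C x⟫_ℂ) :
    C.IsPositive := by
  refine (LinearMap.isPositive_iff_complex C).mpr fun x => ?_
  rw [← inner_conj_symm, ← hC, inner_self_eq_norm_sq_to_K]
  simp only [← RCLike.ofReal_pow, RCLike.conj_ofReal, RCLike.ofReal_re]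
  exact ⟨rfl, sq_nonneg _⟩

theorem apply_antilinear_conj_apply (hs : ∀ x, s (s x) = x)
    (hC : ∀ x y : V, ⟪s x, s y⟫_ℂ = ⟪y, C x⟫_ℂ) (x : V) : C (s (C (s x))) = x := by
  refine ext_inner_left ℂ fun y => ?_
  rw [← hC, hs, ← inner_conj_symm, ← hC, hs, hs, inner_conj_symm]

theorem isPositive_antilinear_conj (hs : ∀ x, s (s x) = x)
    (hC : ∀ x y : V, ⟪s x, s y⟫_ℂ = ⟪y, C x⟫_ℂ) {R : V →ₗ[ℂ] V} (hR : R.IsPositive)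
    (hRC : R * R = C) : (s.comp (R.comp s)).IsPositive := by
  refine (LinearMap.isPositive_iff_complex _).mpr fun x => ?_
  have : ⟪s (R (s x)), x⟫_ℂ = ⟪R (R (s x)), R (s x)⟫_ℂ := by
    rw [← hs x, hC, hs, ← hRC, Module.End.mul_apply, ← hR.isSymmetric (s x),
      ← hR.isSymmetric (R (s x))]
  simpa [this] using (LinearMap.isPositive_iff_complex R).mp hR (R (s x))

variable [FiniteDimensional ℂ V]

theorem bijective_of_mul_self_eq (hs : ∀ x, s (s x) = x)
    (hC : ∀ x y : V, ⟪s x, s y⟫_ℂ = ⟪y, C x⟫_ℂ) {R : V →ₗ[ℂ] V} (hRC : R * R = C) :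
    Function.Bijective R := by
  have hsurj : Function.Surjective R := fun x => ⟨R (s (C (s x))), by
    rw [← Module.End.mul_apply, hRC, apply_antilinear_conj_apply hs hC]⟩
  exact ⟨LinearMap.injective_iff_surjective.mpr hsurj, hsurj⟩

theorem antilinear_conj_eq_symm (hs : ∀ x, s (s x) = x)
    (hC : ∀ x y : V, ⟪s x, s y⟫_ℂ = ⟪y, C x⟫_ℂ) {R : V →ₗ[ℂ] V} (hR : R.IsPositive)
    (hRC : R * R = C) (hbij : Function.Bijective R) :
    s.comp (R.comp s) = (LinearEquiv.ofBijective R hbij).symm := by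
  refine (isPositive_antilinear_conj hs hC hR hRC).eq_symm_of_mul_self_mul_mul_self_eq_one hR ?_
  ext x
  simp only [Module.End.mul_apply, LinearEquiv.coe_coe, LinearEquiv.ofBijective_apply,
    LinearMap.comp_apply, hs, Module.End.one_apply]
  rw [← Module.End.mul_apply R R, hRC, ← Module.End.mul_apply R R, hRC,
    apply_antilinear_conj_apply hs hC]

end AntilinearInvolution

open AntilinearInvolution

/-- the antilinear involution `s` admits a polar decomposition: there exist a
selfadjoint positive-definite ℂ-linear `R` with `R ∘ R = C` and a conjugate-linear `J` with
`J ∘ J = id` and `⟨J x, J y⟩ = ⟨y, x⟩`, such that `s = J ∘ R = R⁻¹ ∘ J`; moreover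
`J = s ∘ R⁻¹` (equivalently `J ∘ R = s`, i.e. `R` is bijective and `J` is `s` composed with
the inverse of `R`) and `s ∘ R ∘ s = R⁻¹`. -/
theorem antilinear_involution_polar_decomposition
    {V : Type*} [NormedAddCommGroup V] [InnerProductSpace ℂ V] [FiniteDimensional ℂ V]
    (s : V →ₗ⋆[ℂ] V) (hs : ∀ x : V, s (s x) = x)
    (C : V →ₗ[ℂ] V)
    (hC : ∀ x y : V, (inner ℂ (s x) (s y) : ℂ) = inner ℂ y (C x)) :
    ∃ (R : V →ₗ[ℂ] V) (J : V →ₗ⋆[ℂ] V),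
      R.IsSymmetric ∧
      (∀ x : V, x ≠ 0 → ∃ r : ℝ, ((inner ℂ x (R x) : ℂ) = (r : ℂ)) ∧ 0 < r) ∧
      (∀ x : V, R (R x) = C x) ∧
      Function.Bijective R ∧
      (∀ x : V, J (J x) = x) ∧
      (∀ x y : V, (inner ℂ (J x) (J y) : ℂ) = inner ℂ y x) ∧
      (∀ x : V, s x = J (R x)) ∧
      (∀ x : V, R (s x) = J x) ∧
      (∀ x : V, s (R (s (R x))) = x) ∧
      (∀ x : V, R (s (R (s x))) = x) := by
  obtain ⟨R, hR, hRC⟩ := (isPositive_of_inner_antilinear_eq hC).exists_isPositive_mul_self_eq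
  have hbij := bijective_of_mul_self_eq hs hC hRC
  have hsRs := LinearMap.congr_fun (antilinear_conj_eq_symm hs hC hR hRC hbij)
  have hsRsR (x : V) : s (R (s (R x))) = x := by simpa using hsRs (R x)
  have hRsRs (x : V) : R (s (R (s x))) = x := by simpa using congrArg R (hsRs x)
  refine ⟨R, R.comp s, hR.isSymmetric, fun x hx => ?_, fun x => by rw [← hRC]; rfl, hbij,
    hRsRs, fun x y => ?_, fun x => ?_, fun _ => rfl, hsRsR, hRsRs⟩
  · obtain ⟨r, hr, hrx⟩ := RCLike.pos_iff_exists_ofReal.mp (hR.inner_pos_of_injective hbij.1 hx)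
    exact ⟨r, hrx.symm, hr⟩
  · rw [LinearMap.comp_apply, LinearMap.comp_apply, hR.isSymmetric, ← Module.End.mul_apply, hRC,
      ← hC, hs, hs]
  · simpa [hs] using (congrArg s (hsRsR x)).symm
end

section
/- Let R be a selfadjoint positive-definite ℂ-linear map with R ∘ R = C, set J = s ∘ R⁻¹, and let (θ₁, …, θ_d) be an orthonormal basis of V with J(θᵢ) = θᵢ for each i. Then the matrix M with entries Mᵢⱼ = ⟨θᵢ, R θⱼ⟩ is complex orthogonal: Mᵀ M = 1, i.e. M⁻¹ = Mᵀ. -/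
/-!
Positivity makes `R` injective, hence invertible in finite dimension, so `J θᵢ = θᵢ` says
`R (s θᵢ) = θᵢ`. Combining this with `R² = C` and the defining identity of `C` gives
`Mₖᵢ = ⟨s θᵢ, θₖ⟩`, and then Parseval's identity turns `(Mᵀ M)ᵢⱼ` into
`⟨s θᵢ, R θⱼ⟩ = ⟨R s θᵢ, θⱼ⟩ = ⟨θᵢ, θⱼ⟩ = δᵢⱼ`.
-/

open scoped InnerProductSpace

theorem LinearMap.injective_of_inner_map_self_ne_zero {𝕜 V : Type*} [RCLike 𝕜]
    [NormedAddCommGroup V] [InnerProductSpace 𝕜 V] {T : V →ₗ[𝕜] V}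
    (hT : ∀ x : V, x ≠ 0 → ⟪x, T x⟫_𝕜 ≠ 0) : Function.Injective T := by
  refine (injective_iff_map_eq_zero T).2 fun x hx => ?_
  by_contra hx0
  exact hT x hx0 (by simp [hx])

theorem Function.Surjective.apply_apply_eq_of_isFixedPt {α : Type*} {R s J : α → α}
    (hR : Function.Surjective R) (hJ : ∀ x, J (R x) = s x) (hs : Function.Involutive s)
    {v : α} (hv : Function.IsFixedPt J v) : R (s v) = v := by
  obtain ⟨x, rfl⟩ := hR v
  have hsx : s x = R x := (hJ x).symm.trans hv
  conv_lhs => rw [← hsx, hs x]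

section ModularConjugation

variable {V : Type*} [NormedAddCommGroup V] [InnerProductSpace ℂ V]
  {s : V →ₗ⋆[ℂ] V} {C R : V →ₗ[ℂ] V}

theorem inner_map_eq_inner_conj_of_map_conj_eq (hs : ∀ x : V, s (s x) = x)
    (hC : ∀ x y : V, ⟪s x, s y⟫_ℂ = ⟪y, C x⟫_ℂ) (hRsym : R.IsSymmetric)
    (hRR : ∀ x : V, R (R x) = C x) {u : V} (hu : R (s u) = u) (v : V) :
    ⟪u, R v⟫_ℂ = ⟪s v, u⟫_ℂ :=
  calc ⟪u, R v⟫_ℂ = ⟪R (s u), R v⟫_ℂ := by rw [hu]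
    _ = ⟪s u, C v⟫_ℂ := by rw [hRsym, hRR]
    _ = ⟪s v, u⟫_ℂ := by rw [← hC, hs]

theorem transpose_mul_self_eq_one_of_map_conj_eq {ι : Type*} [Fintype ι] [DecidableEq ι]
    (hs : ∀ x : V, s (s x) = x) (hC : ∀ x y : V, ⟪s x, s y⟫_ℂ = ⟪y, C x⟫_ℂ)
    (hRsym : R.IsSymmetric) (hRR : ∀ x : V, R (R x) = C x) (θ : OrthonormalBasis ι ℂ V)
    (hθ : ∀ i, R (s (θ i)) = θ i) {M : Matrix ι ι ℂ} (hM : ∀ i j, M i j = ⟪θ i, R (θ j)⟫_ℂ) :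
    M.transpose * M = 1 := by
  ext i j
  calc (M.transpose * M) i j = ∑ k, ⟪s (θ i), θ k⟫_ℂ * ⟪θ k, R (θ j)⟫_ℂ := by
        simp only [Matrix.mul_apply, Matrix.transpose_apply, hM,
          inner_map_eq_inner_conj_of_map_conj_eq hs hC hRsym hRR (hθ _)]
    _ = ⟪θ i, θ j⟫_ℂ := by rw [θ.sum_inner_mul_inner, ← hRsym, hθ]
    _ = (1 : Matrix ι ι ℂ) i j := by
        rw [orthonormal_iff_ite.mp θ.orthonormal, Matrix.one_apply]

end ModularConjugation

/-- let `R` be a selfadjoint positive-definite square root of `C`, set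
`J = s ∘ R⁻¹` (i.e. `J (R x) = s x`), and let `(θ₁, …, θ_d)` be an orthonormal basis of `V`
fixed by `J`. Then the matrix `M` with `Mᵢⱼ = ⟨θᵢ, R θⱼ⟩` is complex orthogonal:
`Mᵀ M = 1`, i.e. `M⁻¹ = Mᵀ`. -/
theorem sqrt_modular_matrix_orthogonal
    {V : Type*} [NormedAddCommGroup V] [InnerProductSpace ℂ V] [FiniteDimensional ℂ V]
    (s : V →ₗ⋆[ℂ] V) (hs : ∀ x : V, s (s x) = x)
    (C : V →ₗ[ℂ] V)
    (hC : ∀ x y : V, (inner ℂ (s x) (s y) : ℂ) = inner ℂ y (C x))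
    (R : V →ₗ[ℂ] V) (hRsym : R.IsSymmetric)
    (hRpos : ∀ x : V, x ≠ 0 → ∃ r : ℝ, ((inner ℂ x (R x) : ℂ) = (r : ℂ)) ∧ 0 < r)
    (hRR : ∀ x : V, R (R x) = C x)
    (J : V →ₗ⋆[ℂ] V) (hJ : ∀ x : V, J (R x) = s x)
    {d : ℕ} (θ : OrthonormalBasis (Fin d) ℂ V)
    (hθ : ∀ i : Fin d, J (θ i) = θ i)
    (M : Matrix (Fin d) (Fin d) ℂ)
    (hM : ∀ i j : Fin d, M i j = inner ℂ (θ i) (R (θ j))) :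
    M.transpose * M = 1 ∧ M * M.transpose = 1 := by
  have hRinj : Function.Injective R := LinearMap.injective_of_inner_map_self_ne_zero fun x hx => by
    obtain ⟨r, hr, hrpos⟩ := hRpos x hx
    rw [hr]
    exact_mod_cast hrpos.ne'
  have hRsurj : Function.Surjective R := LinearMap.injective_iff_surjective.mp hRinj
  have hfix : ∀ i, R (s (θ i)) = θ i := fun i =>
    hRsurj.apply_apply_eq_of_isFixedPt hJ hs (hθ i)
  have hMtM : M.transpose * M = 1 :=
    transpose_mul_self_eq_one_of_map_conj_eq hs hC hRsym hRR θ hfix hM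
  exact ⟨hMtM, mul_eq_one_comm.mp hMtM⟩
end

section
/- Assume σ ∘ τ = τ ∘ σ on V ⊗ V, and assume the relations τ₂ σ₁ τ₂ = σ₁ τ₂ τ₁ and τ₁ σ₂ τ₁ = σ₂ τ₁ τ₂ hold on V ⊗ V ⊗ V. Then the space of τ-antisymmetric tensors is invariant under both σ-twists: if ψ ∈ V ⊗ V ⊗ V is τ-antisymmetric, then σ₁ψ and σ₂ψ are τ-antisymmetric as well (τ₁(σ₁ψ) = −σ₁ψ, τ₂(σ₁ψ) = −σ₁ψ, τ₁(σ₂ψ) = −σ₂ψ, τ₂(σ₂ψ) = −σ₂ψ). -/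
open TensorProduct
/-- The twist `σ₁ = σ ⊗ id` acting on `V ⊗ V ⊗ V` (right-associated), via the standard
associativity identifications. -/
noncomputable def twistFst {V : Type*} [AddCommGroup V] [Module ℂ V]
    (σ : V ⊗[ℂ] V →ₗ[ℂ] V ⊗[ℂ] V) :
    V ⊗[ℂ] (V ⊗[ℂ] V) →ₗ[ℂ] V ⊗[ℂ] (V ⊗[ℂ] V) :=
  (TensorProduct.assoc ℂ V V V).toLinearMap ∘ₗ
    (TensorProduct.map σ LinearMap.id) ∘ₗ (TensorProduct.assoc ℂ V V V).symm.toLinearMap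
/-- The twist `σ₂ = id ⊗ σ` acting on `V ⊗ V ⊗ V` (right-associated). -/
noncomputable def twistSnd {V : Type*} [AddCommGroup V] [Module ℂ V]
    (σ : V ⊗[ℂ] V →ₗ[ℂ] V ⊗[ℂ] V) :
    V ⊗[ℂ] (V ⊗[ℂ] V) →ₗ[ℂ] V ⊗[ℂ] (V ⊗[ℂ] V) :=
  TensorProduct.map LinearMap.id σ
lemma tF_comp {V : Type*} [AddCommGroup V] [Module ℂ V]
    (f g : V ⊗[ℂ] V →ₗ[ℂ] V ⊗[ℂ] V) :
    twistFst f ∘ₗ twistFst g = twistFst (f ∘ₗ g) := by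
  unfold twistFst
  ext x y z
  simp
lemma tS_comp {V : Type*} [AddCommGroup V] [Module ℂ V]
    (f g : V ⊗[ℂ] V →ₗ[ℂ] V ⊗[ℂ] V) :
    twistSnd f ∘ₗ twistSnd g = twistSnd (f ∘ₗ g) := by
  unfold twistSnd
  ext x y z
  simp
/-- assume `σ ∘ τ = τ ∘ σ` on `V ⊗ V`, `τ₂ σ₁ τ₂ = σ₁ τ₂ τ₁` and
`τ₁ σ₂ τ₁ = σ₂ τ₁ τ₂` on `V ⊗ V ⊗ V`. Then the space of τ-antisymmetric tensors is
invariant under both σ-twists. -/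
theorem antisymmetric_invariant_under_sigma_twists
    {V : Type*} [AddCommGroup V] [Module ℂ V]
    (σ τ : V ⊗[ℂ] V →ₗ[ℂ] V ⊗[ℂ] V)
    (hcomm : σ ∘ₗ τ = τ ∘ₗ σ)
    (hrel1 : twistSnd τ ∘ₗ twistFst σ ∘ₗ twistSnd τ = twistFst σ ∘ₗ twistSnd τ ∘ₗ twistFst τ)
    (hrel2 : twistFst τ ∘ₗ twistSnd σ ∘ₗ twistFst τ = twistSnd σ ∘ₗ twistFst τ ∘ₗ twistSnd τ)
    (ψ : V ⊗[ℂ] (V ⊗[ℂ] V))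
    (hψ1 : twistFst τ ψ = -ψ) (hψ2 : twistSnd τ ψ = -ψ) :
    twistFst τ (twistFst σ ψ) = -(twistFst σ ψ) ∧
    twistSnd τ (twistFst σ ψ) = -(twistFst σ ψ) ∧
    twistFst τ (twistSnd σ ψ) = -(twistSnd σ ψ) ∧
    twistSnd τ (twistSnd σ ψ) = -(twistSnd σ ψ) := by
  refine ⟨?_, ?_, ?_, ?_⟩
  · have h : twistFst τ (twistFst σ ψ) = twistFst σ (twistFst τ ψ) := by
      have := congrArg (fun f => f ψ) (by rw [tF_comp, tF_comp, hcomm] :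
        twistFst τ ∘ₗ twistFst σ = twistFst σ ∘ₗ twistFst τ)
      simpa using this
    rw [h, hψ1, map_neg]
  · have h := congrArg (fun f => f ψ) hrel1
    simp only [LinearMap.comp_apply, hψ1, hψ2, map_neg, neg_neg] at h
    exact (neg_eq_iff_eq_neg.mp h)
  · have h := congrArg (fun f => f ψ) hrel2
    simp only [LinearMap.comp_apply, hψ1, hψ2, map_neg, neg_neg] at h
    exact (neg_eq_iff_eq_neg.mp h)
  · have h : twistSnd τ (twistSnd σ ψ) = twistSnd σ (twistSnd τ ψ) := by
      have := congrArg (fun f => f ψ) (by rw [tS_comp, tS_comp, hcomm] :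
        twistSnd τ ∘ₗ twistSnd σ = twistSnd σ ∘ₗ twistSnd τ)
      simpa using this
    rw [h, hψ2, map_neg]
end
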